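/- arXiv:1102.1419 — 2 statements merged into one kernel-verified Lean document; each statement's English description precedes it below -/
import Mathlib

section
/- Let (X,p) be a TVS-cone metric space over E with cone P, equipped with the cone metric topology τ_p. A subset A ⊆ X is closed in τ_p if and only if A is sequentially closed, i.e., whenever a sequence (x_n) with all x_n ∈ A cone-converges to some x ∈ X, then x ∈ A. -/
open Filter Topology

section Defs

variable {E : Type*} [AddCommGroup E] [Module ℝ E] [TopologicalSpace E]

/-- `P` is a closed, pointed convex cone with nonempty interior in the TVS `E`. -/
structure IsTVSCone (P : Set E) : Prop where
  add_mem : ∀ ⦃a⦄, a ∈ P → ∀ ⦃b⦄, b ∈ P → a + b ∈ P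
  smul_mem : ∀ (r : ℝ), 0 ≤ r → ∀ ⦃a⦄, a ∈ P → r • a ∈ P
  pointed : ∀ a, a ∈ P → -a ∈ P → a = 0
  isClosed : IsClosed P
  int_nonempty : (interior P).Nonempty

/-- `a ≤ b` with respect to the cone `P`. -/
def ConeLe (P : Set E) (a b : E) : Prop := b - a ∈ P

/-- `a ≪ b` with respect to the cone `P`. -/
def ConeLt (P : Set E) (a b : E) : Prop := b - a ∈ interior P

/-- `p : X × X → E` is a TVS-cone metric over the cone `P`. -/
structure IsConeMetric (P : Set E) {X : Type*} (p : X → X → E) : Prop where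
  nonneg : ∀ x y, ConeLe P 0 (p x y)
  eq_zero_iff : ∀ x y, p x y = 0 ↔ x = y
  symm : ∀ x y, p x y = p y x
  triangle : ∀ x y z, ConeLe P (p x y) (p x z + p z y)

/-- The sequence `x` cone-converges to `a`. -/
def ConeConverges (P : Set E) {X : Type*} (p : X → X → E) (x : ℕ → X) (a : X) : Prop :=
  ∀ c, c ∈ interior P → ∃ N, ∀ n ≥ N, ConeLt P (p (x n) a) c

/-- The sequence `x` is cone-Cauchy. -/
def ConeCauchy (P : Set E) {X : Type*} (p : X → X → E) (x : ℕ → X) : Prop :=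
  ∀ c, c ∈ interior P → ∃ N, ∀ n ≥ N, ∀ m ≥ N, ConeLt P (p (x n) (x m)) c

/-- `(X, p)` is cone-complete. -/
def ConeComplete (P : Set E) {X : Type*} (p : X → X → E) : Prop :=
  ∀ x : ℕ → X, ConeCauchy P p x → ∃ a, ConeConverges P p x a

/-- The nonlinear scalarization ξ_e(y) = inf {t : t • e - y ∈ P}. -/
noncomputable def xiScal (P : Set E) (e y : E) : ℝ := sInf {t : ℝ | t • e - y ∈ P}

/-- The open ball `B(x, c) = {y : p x y ≪ c}`. -/
def coneBall (P : Set E) {X : Type*} (p : X → X → E) (x : X) (c : E) : Set X :=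
  {y | ConeLt P (p x y) c}

/-- The cone metric topology `τ_p`, generated by the balls `B(x,c)`, `c ≫ 0`. -/
def coneTopology (P : Set E) {X : Type*} (p : X → X → E) : TopologicalSpace X :=
  TopologicalSpace.generateFrom {s | ∃ x c, c ∈ interior P ∧ s = coneBall P p x c}

end Defs

/-!
The balls `B(a, c)`, `c ≫ 0`, form a neighbourhood basis of `a` in `τ_p`: a ball contains a ball
around each of its points by the triangle inequality, and two balls around `a` contain a third one
because `int P` is directed downwards. Fixing `e ≫ 0`, every `c ≫ 0` dominates `e / (n + 1)` for
large `n`, so the balls `B(a, e / (n + 1))` already form a countable basis. Hence `τ_p` is first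
countable, so its closed sets are its sequentially closed ones, and convergence in `τ_p` is
cone convergence.
-/

open Pointwise

section ConeMetricSpace

variable {E : Type*} [AddCommGroup E] [TopologicalSpace E] {P : Set E}

theorem mem_coneBall_self {X : Type*} {p : X → X → E} (hp : IsConeMetric P p) (x : X)
    {c : E} (hc : c ∈ interior P) :
    x ∈ coneBall P p x c := by
  simpa [coneBall, ConeLt, (hp.eq_zero_iff x x).2 rfl] using hc

variable [Module ℝ E]

theorem eventually_sub_smul_mem_interior [IsTopologicalAddGroup E] [ContinuousSMul ℝ E]
    {c : E} (hc : c ∈ interior P) (e : E) :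
    ∀ᶠ n : ℕ in atTop, c - (1 / ((n : ℝ) + 1)) • e ∈ interior P := by
  have hlim : Tendsto (fun n : ℕ => c - (1 / ((n : ℝ) + 1)) • e) atTop (𝓝 c) := by
    simpa using tendsto_const_nhds.sub
      ((tendsto_one_div_add_atTop_nhds_zero_nat (𝕜 := ℝ)).smul_const e)
  exact hlim.eventually_mem (isOpen_interior.mem_nhds hc)

namespace IsTVSCone

theorem add_mem_interior [IsTopologicalAddGroup E] (hP : IsTVSCone P) {a b : E}
    (ha : a ∈ interior P) (hb : b ∈ P) : a + b ∈ interior P :=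
  interior_maximal
    (Set.add_subset_iff.2 fun _ hx _ hy => hP.add_mem (interior_subset hx) hy)
    isOpen_interior.add_right (Set.add_mem_add ha hb)

theorem smul_mem_interior [ContinuousSMul ℝ E] (hP : IsTVSCone P) {t : ℝ} (ht : 0 < t) {c : E}
    (hc : c ∈ interior P) : t • c ∈ interior P :=
  interior_maximal
    (Set.smul_set_subset_iff.2 fun _ hx => hP.smul_mem t ht.le (interior_subset hx))
    (isOpen_interior.smul₀ ht.ne') (Set.smul_mem_smul_set hc)

theorem exists_mem_interior_le_le [IsTopologicalAddGroup E] [ContinuousSMul ℝ E]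
    (hP : IsTVSCone P) {c₁ c₂ : E} (hc₁ : c₁ ∈ interior P) (hc₂ : c₂ ∈ interior P) :
    ∃ c ∈ interior P, ConeLe P c c₁ ∧ ConeLe P c c₂ := by
  obtain ⟨e, he⟩ := hP.int_nonempty
  obtain ⟨n, h₁, h₂⟩ := ((eventually_sub_smul_mem_interior hc₁ e).and
    (eventually_sub_smul_mem_interior hc₂ e)).exists
  exact ⟨_, hP.smul_mem_interior (by positivity) he, interior_subset h₁, interior_subset h₂⟩

end IsTVSCone

section Order

variable [IsTopologicalAddGroup E] {a b c : E}

theorem ConeLt.trans_coneLe (hP : IsTVSCone P) (hab : ConeLt P a b) (hbc : ConeLe P b c) :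
    ConeLt P a c := by
  simpa only [ConeLt, sub_add_sub_cancel'] using hP.add_mem_interior hab hbc

theorem ConeLe.trans_coneLt (hP : IsTVSCone P) (hab : ConeLe P a b) (hbc : ConeLt P b c) :
    ConeLt P a c := by
  simpa only [ConeLt, sub_add_sub_cancel] using hP.add_mem_interior hbc hab

end Order

section ConeTopology

variable [IsTopologicalAddGroup E] {X : Type*} {p : X → X → E}

theorem coneBall_mono (hP : IsTVSCone P) (x : X) {c d : E} (hcd : ConeLe P c d) :
    coneBall P p x c ⊆ coneBall P p x d :=
  fun _ hy => ConeLt.trans_coneLe hP hy hcd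

theorem coneBall_subset_coneBall' (hP : IsTVSCone P) (hp : IsConeMetric P p) {x y : X}
    {c : E} : coneBall P p y (c - p x y) ⊆ coneBall P p x c := by
  intro z hz
  have hz' : ConeLt P (p x y + p y z) c := by
    rw [ConeLt, ← sub_sub]
    exact hz
  exact ConeLe.trans_coneLt hP (hp.triangle x z y) hz'

theorem exists_coneBall_subset_of_isOpen [ContinuousSMul ℝ E] (hP : IsTVSCone P)
    (hp : IsConeMetric P p) {U : Set X} (hU : IsOpen[coneTopology P p] U) :
    ∀ a ∈ U, ∃ c ∈ interior P, coneBall P p a c ⊆ U := by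
  induction hU with
  | basic s hs =>
    obtain ⟨x, c, -, rfl⟩ := hs
    exact fun a ha => ⟨c - p x a, ha, coneBall_subset_coneBall' hP hp⟩
  | univ =>
    obtain ⟨c, hc⟩ := hP.int_nonempty
    exact fun _ _ => ⟨c, hc, Set.subset_univ _⟩
  | inter U V _ _ ihU ihV =>
    rintro a ⟨haU, haV⟩
    obtain ⟨c₁, hc₁, hU⟩ := ihU a haU
    obtain ⟨c₂, hc₂, hV⟩ := ihV a haV
    obtain ⟨c, hc, hc₁', hc₂'⟩ := hP.exists_mem_interior_le_le hc₁ hc₂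
    exact ⟨c, hc, Set.subset_inter ((coneBall_mono hP a hc₁').trans hU)
      ((coneBall_mono hP a hc₂').trans hV)⟩
  | sUnion S _ ih =>
    rintro a ⟨U, hUS, haU⟩
    obtain ⟨c, hc, hsub⟩ := ih U hUS a haU
    exact ⟨c, hc, hsub.trans (Set.subset_sUnion_of_mem hUS)⟩

theorem nhds_basis_coneBall [ContinuousSMul ℝ E] (hP : IsTVSCone P)
    (hp : IsConeMetric P p) (a : X) :
    (@nhds X (coneTopology P p) a).HasBasis (· ∈ interior P) (coneBall P p a) := by
  let := coneTopology P p
  refine ⟨fun t => ⟨fun ht => ?_, fun ⟨c, hc, hsub⟩ => ?_⟩⟩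
  · obtain ⟨U, hUt, hU, haU⟩ := mem_nhds_iff.1 ht
    obtain ⟨c, hc, hsub⟩ := exists_coneBall_subset_of_isOpen hP hp hU a haU
    exact ⟨c, hc, hsub.trans hUt⟩
  · exact mem_nhds_iff.2 ⟨_, hsub, .basic _ ⟨a, c, hc, rfl⟩, mem_coneBall_self hp a hc⟩

theorem firstCountableTopology_coneTopology [ContinuousSMul ℝ E] (hP : IsTVSCone P)
    (hp : IsConeMetric P p) : @FirstCountableTopology X (coneTopology P p) := by
  let := coneTopology P p
  obtain ⟨e, he⟩ := hP.int_nonempty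
  refine ⟨fun a => ((nhds_basis_coneBall hP hp a).to_hasBasis
    (p' := fun _ : ℕ => True) (s' := fun n => coneBall P p a ((1 / ((n : ℝ) + 1)) • e))
    (fun c hc => ?_) (fun n _ => ?_)).isCountablyGenerated⟩
  · obtain ⟨n, hn⟩ := (eventually_sub_smul_mem_interior hc e).exists
    exact ⟨n, trivial, coneBall_mono hP a (interior_subset hn)⟩
  · exact ⟨_, hP.smul_mem_interior (by positivity) he, subset_rfl⟩

theorem coneConverges_iff_tendsto [ContinuousSMul ℝ E] (hP : IsTVSCone P)
    (hp : IsConeMetric P p) (x : ℕ → X) (a : X) :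
    ConeConverges P p x a ↔ Tendsto x atTop (@nhds X (coneTopology P p) a) := by
  simp only [(nhds_basis_coneBall hP hp a).tendsto_right_iff, eventually_atTop,
    ConeConverges, coneBall, Set.mem_ofPred_eq, hp.symm a]

end ConeTopology

end ConeMetricSpace

theorem stmt_10_general {E X : Type*} [AddCommGroup E] [Module ℝ E] [TopologicalSpace E]
    [IsTopologicalAddGroup E] [ContinuousSMul ℝ E]
    (P : Set E) (hP : IsTVSCone P) (p : X → X → E) (hp : IsConeMetric P p) (A : Set X) :
    @IsClosed X (coneTopology P p) A ↔
      ∀ x : ℕ → X, (∀ n, x n ∈ A) → ∀ a : X, ConeConverges P p x a → a ∈ A := by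
  have := firstCountableTopology_coneTopology hP hp
  rw [← @isSeqClosed_iff_isClosed X (coneTopology P p) _ A]
  simp only [coneConverges_iff_tendsto hP hp]
  exact ⟨fun hA x hx a hxa => hA hx hxa, fun hA x a hx hxa => hA x hx a hxa⟩

/-- `A ⊆ X` is closed in `τ_p` iff it is sequentially closed for cone
convergence. -/
theorem stmt_10 {E X : Type*} [AddCommGroup E] [Module ℝ E] [TopologicalSpace E]
    [IsTopologicalAddGroup E] [ContinuousSMul ℝ E] [T2Space E] [Nonempty X]
    (P : Set E) (hP : IsTVSCone P) (p : X → X → E) (hp : IsConeMetric P p) (A : Set X) :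
    @IsClosed X (coneTopology P p) A ↔
      ∀ x : ℕ → X, (∀ n, x n ∈ A) → ∀ a : X, ConeConverges P p x a → a ∈ A :=
  stmt_10_general P hP p hp A
end

section
/- Let (X,p) be a cone-complete TVS-cone metric space over E with cone P, fix e ∈ int P, and let T : X → X and φ : E → E satisfy: φ(P) ⊆ P; φ is increasing on P (if a, b ∈ P and a ≤ b then φ(a) ≤ φ(b)); φ(r·e) ≤ r·φ(e) for every real r ≥ 0; ξ_e(φ(e)) < 1; and p(Tx, Ty) ≤ φ(p(x,y)) for all x, y ∈ X. Then T has a unique fixed point u ∈ X, and for every x ∈ X the sequence of iterates (Tⁿx) cone-converges to u. -/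
open Filter Topology

/-!
Since `e ≫ 0` is an order unit, cone convergence can be measured along the ray `ℝ≥0 • e`:
`x n → a` iff for every `ε > 0` eventually `p (x n) a ≤ ε • e`. From `ξ_e (φ e) < 1` we get
`φ e ≤ k • e` with `0 ≤ k < 1`, and monotonicity and subhomogeneity of `φ` turn
`p x y ≤ t • e` into `p (T x) (T y) ≤ (k * t) • e`. As for Banach's theorem, this gives
`p (Tⁿ x) (Tⁿ⁺ʲ x) ≤ (kⁿ t / (1 - k)) • e`, so orbits are Cauchy; the limit is fixed because
`T` preserves cone convergence, and every orbit approaches a fixed point like `kⁿ`, which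
forces uniqueness.
-/

namespace IsTVSCone

variable {E : Type*} [AddCommGroup E] [Module ℝ E] [TopologicalSpace E] {P : Set E} {a b c d e : E}

theorem coneLe_trans (hP : IsTVSCone P) (hab : ConeLe P a b) (hbc : ConeLe P b c) :
    ConeLe P a c := by
  simpa [ConeLe] using hP.add_mem hbc hab

theorem coneLe_add (hP : IsTVSCone P) (hab : ConeLe P a b) (hcd : ConeLe P c d) :
    ConeLe P (a + c) (b + d) := by
  simpa [ConeLe, sub_add_sub_comm] using hP.add_mem hab hcd

theorem smul_coneLe_smul (hP : IsTVSCone P) {r : ℝ} (hr : 0 ≤ r) (hab : ConeLe P a b) :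
    ConeLe P (r • a) (r • b) := by
  simpa [ConeLe, smul_sub] using hP.smul_mem r hr hab

theorem smul_coneLe_smul_of_le (hP : IsTVSCone P) (he : e ∈ P) {r s : ℝ} (hrs : r ≤ s) :
    ConeLe P (r • e) (s • e) := by
  simpa [ConeLe, sub_smul] using hP.smul_mem (s - r) (sub_nonneg.2 hrs) he

theorem coneLt_of_coneLe_of_coneLt [IsTopologicalAddGroup E] (hP : IsTVSCone P)
    (hab : ConeLe P a b) (hbc : ConeLt P b c) : ConeLt P a c := by
  have hsub : (· + (b - a)) '' interior P ⊆ P := by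
    rintro _ ⟨z, hz, rfl⟩
    exact hP.add_mem (interior_subset hz) hab
  have := interior_maximal hsub (isOpenMap_add_right _ _ isOpen_interior) ⟨_, hbc, rfl⟩
  simpa [ConeLt] using this

theorem smul_mem_interior_s17 [ContinuousConstSMul ℝ E] (hP : IsTVSCone P) {r : ℝ} (hr : 0 < r)
    (ha : a ∈ interior P) : r • a ∈ interior P := by
  have hsub : (r • ·) '' interior P ⊆ P := by
    rintro _ ⟨z, hz, rfl⟩
    exact hP.smul_mem r hr.le (interior_subset hz)
  exact interior_maximal hsub (isOpenMap_smul₀ hr.ne' _ isOpen_interior) ⟨a, ha, rfl⟩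

variable [IsTopologicalAddGroup E] [ContinuousSMul ℝ E]

theorem exists_smul_coneLt (hc : c ∈ interior P) (a : E) :
    ∃ ε : ℝ, 0 < ε ∧ ConeLt P (ε • a) c := by
  have hlim : Tendsto (fun ε : ℝ => c - ε • a) (𝓝[>] 0) (𝓝 c) := by
    have : Continuous fun ε : ℝ => c - ε • a := by fun_prop
    simpa using (this.tendsto 0).mono_left nhdsWithin_le_nhds
  exact ((hlim.eventually (isOpen_interior.mem_nhds hc)).and self_mem_nhdsWithin).exists.imp
    fun ε h => ⟨h.2, h.1⟩

theorem exists_coneLe_smul (hP : IsTVSCone P) (he : e ∈ interior P) (a : E) :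
    ∃ t : ℝ, 0 < t ∧ ConeLe P a (t • e) := by
  obtain ⟨ε, hε, hεa⟩ := exists_smul_coneLt he a
  refine ⟨ε⁻¹, inv_pos.2 hε, ?_⟩
  simpa [ConeLe, smul_sub, smul_smul, hε.ne'] using
    hP.smul_mem _ (inv_pos.2 hε).le (interior_subset hεa)

theorem eq_zero_of_forall_coneLe_smul (hP : IsTVSCone P) (ha : a ∈ P)
    (h : ∀ ε : ℝ, 0 < ε → ConeLe P a (ε • e)) : a = 0 := by
  have hlim : Tendsto (fun ε : ℝ => ε • e - a) (𝓝[>] 0) (𝓝 (-a)) := by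
    have : Continuous fun ε : ℝ => ε • e - a := by fun_prop
    simpa using (this.tendsto 0).mono_left nhdsWithin_le_nhds
  exact hP.pointed a ha (hP.isClosed.mem_of_tendsto hlim (eventually_nhdsWithin_of_forall h))

theorem exists_coneLe_smul_of_xiScal_lt (hP : IsTVSCone P) (he : e ∈ interior P) {r : ℝ}
    (hr : 0 < r) (h : xiScal P e a < r) : ∃ k, 0 ≤ k ∧ k < r ∧ ConeLe P a (k • e) := by
  obtain ⟨t, -, ht⟩ := hP.exists_coneLe_smul he a
  obtain ⟨k, hk, hkr⟩ := exists_lt_of_csInf_lt ⟨t, ht⟩ h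
  exact ⟨max k 0, le_max_right _ _, max_lt hkr hr,
    hP.coneLe_trans hk (hP.smul_coneLe_smul_of_le (interior_subset he) (le_max_left _ _))⟩

end IsTVSCone

section ConeMetric

variable {E X : Type*} [AddCommGroup E] [TopologicalSpace E] {P : Set E} {p : X → X → E}
  {x : ℕ → X} {a b : X}

theorem coneConverges_const (hp : IsConeMetric P p) (a : X) :
    ConeConverges P p (fun _ => a) a := fun c hc =>
  ⟨0, fun _ _ => by simpa [ConeLt, (hp.eq_zero_iff a a).2 rfl] using hc⟩

theorem ConeConverges.comp_tendsto (h : ConeConverges P p x a) {f : ℕ → ℕ}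
    (hf : Tendsto f atTop atTop) : ConeConverges P p (x ∘ f) a := fun c hc => by
  obtain ⟨N, hN⟩ := h c hc
  obtain ⟨M, hM⟩ := eventually_atTop.1 (hf.eventually_ge_atTop N)
  exact ⟨M, fun n hn => hN (f n) (hM n hn)⟩

variable [Module ℝ E] [IsTopologicalAddGroup E] [ContinuousSMul ℝ E] {e : E}

theorem coneConverges_iff_eventually_coneLe_smul (hP : IsTVSCone P) (he : e ∈ interior P) :
    ConeConverges P p x a ↔ ∀ ε : ℝ, 0 < ε → ∀ᶠ n in atTop, ConeLe P (p (x n) a) (ε • e) := by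
  refine ⟨fun h ε hε => ?_, fun h c hc => ?_⟩
  · obtain ⟨N, hN⟩ := h _ (hP.smul_mem_interior_s17 hε he)
    exact eventually_atTop.2 ⟨N, fun n hn => interior_subset (hN n hn)⟩
  · obtain ⟨ε, hε, hεc⟩ := IsTVSCone.exists_smul_coneLt hc e
    exact eventually_atTop.1 ((h ε hε).mono fun n hn => hP.coneLt_of_coneLe_of_coneLt hn hεc)

theorem coneConverges_of_coneLe_smul (hP : IsTVSCone P) (he : e ∈ interior P) {s : ℕ → ℝ}
    (hs : Tendsto s atTop (𝓝 0)) (h : ∀ n, ConeLe P (p (x n) a) (s n • e)) :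
    ConeConverges P p x a :=
  (coneConverges_iff_eventually_coneLe_smul hP he).2 fun _ hε =>
    (hs.eventually (gt_mem_nhds hε)).mono fun n hn =>
      hP.coneLe_trans (h n) (hP.smul_coneLe_smul_of_le (interior_subset he) hn.le)

theorem coneCauchy_of_coneLe_smul (hP : IsTVSCone P) (hp : IsConeMetric P p)
    (he : e ∈ interior P) {s : ℕ → ℝ} (hs : Tendsto s atTop (𝓝 0))
    (h : ∀ n, ∀ m ≥ n, ConeLe P (p (x n) (x m)) (s n • e)) : ConeCauchy P p x := by
  intro c hc
  obtain ⟨ε, hε, hεc⟩ := IsTVSCone.exists_smul_coneLt hc e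
  obtain ⟨N, hN⟩ := eventually_atTop.1 (hs.eventually (gt_mem_nhds hε))
  have hlt : ∀ n ≥ N, ∀ m ≥ n, ConeLt P (p (x n) (x m)) c := fun n hn m hm =>
    hP.coneLt_of_coneLe_of_coneLt
      (hP.coneLe_trans (h n m hm) (hP.smul_coneLe_smul_of_le (interior_subset he) (hN n hn).le))
      hεc
  refine ⟨N, fun n hn m hm => ?_⟩
  rcases le_total n m with hnm | hmn
  · exact hlt n hn m hnm
  · rw [hp.symm]
    exact hlt m hm n hmn

theorem ConeConverges.unique (hP : IsTVSCone P) (hp : IsConeMetric P p)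
    (ha : ConeConverges P p x a) (hb : ConeConverges P p x b) : a = b := by
  obtain ⟨e, he⟩ := hP.int_nonempty
  rw [coneConverges_iff_eventually_coneLe_smul hP he] at ha hb
  refine (hp.eq_zero_iff a b).1 (hP.eq_zero_of_forall_coneLe_smul (e := e) ?_ fun ε hε => ?_)
  · simpa [ConeLe] using hp.nonneg a b
  obtain ⟨n, hna, hnb⟩ := ((ha (ε / 2) (half_pos hε)).and (hb (ε / 2) (half_pos hε))).exists
  rw [hp.symm] at hna
  have := hP.coneLe_trans (hp.triangle a b (x n)) (hP.coneLe_add hna hnb)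
  rwa [← add_smul, add_halves] at this

end ConeMetric

section Contraction

variable {E X : Type*} [AddCommGroup E] [Module ℝ E] {P : Set E} {p : X → X → E} {e : E}
  {k : ℝ} {T : X → X}

def ConeContractingWith (P : Set E) (p : X → X → E) (e : E) (k : ℝ) (T : X → X) : Prop :=
  ∀ x y (t : ℝ), 0 ≤ t → ConeLe P (p x y) (t • e) → ConeLe P (p (T x) (T y)) ((k * t) • e)

namespace ConeContractingWith

theorem iterate (hT : ConeContractingWith P p e k T) (hk : 0 ≤ k) {x y : X} {t : ℝ}
    (ht : 0 ≤ t) (hxy : ConeLe P (p x y) (t • e)) (n : ℕ) :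
    ConeLe P (p (T^[n] x) (T^[n] y)) ((k ^ n * t) • e) := by
  induction n with
  | zero => simpa using hxy
  | succ n ih =>
    simpa only [Function.iterate_succ_apply', pow_succ', mul_assoc] using
      hT _ _ _ (by positivity) ih

variable [TopologicalSpace E]

theorem of_comparison (hP : IsTVSCone P) (hp : IsConeMetric P p) (he : e ∈ P) {φ : E → E}
    (hφmono : ∀ a ∈ P, ∀ b ∈ P, ConeLe P a b → ConeLe P (φ a) (φ b))
    (hφhom : ∀ r : ℝ, 0 ≤ r → ConeLe P (φ (r • e)) (r • φ e))
    (hφe : ConeLe P (φ e) (k • e)) (hT : ∀ x y, ConeLe P (p (T x) (T y)) (φ (p x y))) :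
    ConeContractingWith P p e k T := by
  intro x y t ht hxy
  have hφ : ConeLe P (φ (p x y)) (φ (t • e)) :=
    hφmono _ (by simpa [ConeLe] using hp.nonneg x y) _ (hP.smul_mem t ht he) hxy
  have hkt : ConeLe P (t • φ e) ((k * t) • e) := by
    simpa [mul_comm k, mul_smul] using hP.smul_coneLe_smul ht hφe
  exact hP.coneLe_trans (hT x y) (hP.coneLe_trans hφ (hP.coneLe_trans (hφhom t ht) hkt))

theorem coneLe_iterate_add (hT : ConeContractingWith P p e k T) (hP : IsTVSCone P)
    (hp : IsConeMetric P p) (he : e ∈ P) (hk0 : 0 ≤ k) (hk1 : k < 1) {x : X} {t : ℝ}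
    (ht : 0 ≤ t) (hx : ConeLe P (p x (T x)) (t • e)) (j n : ℕ) :
    ConeLe P (p (T^[n] x) (T^[n + j] x)) ((k ^ n * t / (1 - k)) • e) := by
  have hk : 0 < 1 - k := sub_pos.2 hk1
  induction j generalizing n with
  | zero =>
    simpa [ConeLe, (hp.eq_zero_iff _ _).2] using hP.smul_mem _ (by positivity) he
  | succ j ih =>
    have hstep : ConeLe P (p (T^[n] x) (T^[n + 1] x)) ((k ^ n * t) • e) := by
      simpa only [Function.iterate_succ_apply] using hT.iterate hk0 ht hx n
    have htail := ih (n + 1)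
    rw [Nat.add_right_comm] at htail
    have hsum : (k ^ n * t) • e + (k ^ (n + 1) * t / (1 - k)) • e =
        (k ^ n * t / (1 - k)) • e := by
      rw [← add_smul]
      congr 1
      field_simp
      ring
    simpa only [hsum, Nat.add_assoc] using
      hP.coneLe_trans (hp.triangle _ _ (T^[n + 1] x)) (hP.coneLe_add hstep htail)

variable [IsTopologicalAddGroup E] [ContinuousSMul ℝ E]

theorem coneCauchy_iterate (hT : ConeContractingWith P p e k T) (hP : IsTVSCone P)
    (hp : IsConeMetric P p) (he : e ∈ interior P) (hk0 : 0 ≤ k) (hk1 : k < 1) (x : X) :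
    ConeCauchy P p (fun n => T^[n] x) := by
  obtain ⟨t, ht, hx⟩ := hP.exists_coneLe_smul he (p x (T x))
  have hs : Tendsto (fun n => k ^ n * t / (1 - k)) atTop (𝓝 0) := by
    simpa using ((tendsto_pow_atTop_nhds_zero_of_lt_one hk0 hk1).mul_const t).div_const (1 - k)
  refine coneCauchy_of_coneLe_smul hP hp he hs fun n m hnm => ?_
  obtain ⟨j, rfl⟩ := Nat.exists_eq_add_of_le hnm
  exact hT.coneLe_iterate_add hP hp (interior_subset he) hk0 hk1 ht.le hx j n

theorem coneConverges_comp (hT : ConeContractingWith P p e k T) (hP : IsTVSCone P)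
    (he : e ∈ interior P) (hk1 : k ≤ 1) {x : ℕ → X} {a : X}
    (h : ConeConverges P p x a) : ConeConverges P p (T ∘ x) (T a) := by
  rw [coneConverges_iff_eventually_coneLe_smul hP he] at h ⊢
  refine fun ε hε => (h ε hε).mono fun n hn => hP.coneLe_trans (hT _ _ ε hε.le hn) ?_
  exact hP.smul_coneLe_smul_of_le (interior_subset he) (mul_le_of_le_one_left hε.le hk1)

theorem coneConverges_iterate (hT : ConeContractingWith P p e k T) (hP : IsTVSCone P)
    (he : e ∈ interior P) (hk0 : 0 ≤ k) (hk1 : k < 1) {u : X} (hu : Function.IsFixedPt T u)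
    (x : X) : ConeConverges P p (fun n => T^[n] x) u := by
  obtain ⟨t, ht, hx⟩ := hP.exists_coneLe_smul he (p x u)
  refine coneConverges_of_coneLe_smul hP he
    (by simpa using (tendsto_pow_atTop_nhds_zero_of_lt_one hk0 hk1).mul_const t) fun n => ?_
  simpa only [(hu.iterate n).eq] using hT.iterate hk0 ht.le hx n

theorem exists_isFixedPt (hT : ConeContractingWith P p e k T) (hP : IsTVSCone P)
    (hp : IsConeMetric P p) (hcomplete : ConeComplete P p) (he : e ∈ interior P) (hk0 : 0 ≤ k)
    (hk1 : k < 1) [Nonempty X] : ∃ u, Function.IsFixedPt T u := by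
  let x₀ : X := Classical.arbitrary X
  obtain ⟨u, hu⟩ := hcomplete _ (hT.coneCauchy_iterate hP hp he hk0 hk1 x₀)
  refine ⟨u, ConeConverges.unique hP hp (x := fun n => T^[n + 1] x₀) ?_ ?_⟩
  · simpa only [Function.comp_def, Function.iterate_succ_apply'] using
      hT.coneConverges_comp hP he hk1.le hu
  · exact hu.comp_tendsto (tendsto_add_atTop_nat 1)

end ConeContractingWith

end Contraction

theorem stmt_17_general {E X : Type*} [AddCommGroup E] [Module ℝ E] [TopologicalSpace E]
    [IsTopologicalAddGroup E] [ContinuousSMul ℝ E] [Nonempty X]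
    (P : Set E) (hP : IsTVSCone P) (p : X → X → E) (hp : IsConeMetric P p)
    (hcomplete : ConeComplete P p)
    (e : E) (he : e ∈ interior P) (T : X → X) (φ : E → E)
    (hφmono : ∀ a ∈ P, ∀ b ∈ P, ConeLe P a b → ConeLe P (φ a) (φ b))
    (hφhom : ∀ r : ℝ, 0 ≤ r → ConeLe P (φ (r • e)) (r • φ e))
    (hφlt : xiScal P e (φ e) < 1)
    (hT : ∀ x y : X, ConeLe P (p (T x) (T y)) (φ (p x y))) :
    ∃ u : X, T u = u ∧ (∀ v : X, T v = v → v = u) ∧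
      ∀ x : X, ConeConverges P p (fun n => T^[n] x) u := by
  obtain ⟨k, hk0, hk1, hφe⟩ := hP.exists_coneLe_smul_of_xiScal_lt he one_pos hφlt
  have hcontr : ConeContractingWith P p e k T :=
    .of_comparison hP hp (interior_subset he) hφmono hφhom hφe hT
  obtain ⟨u, hu⟩ := hcontr.exists_isFixedPt hP hp hcomplete he hk0 hk1
  have hconv := hcontr.coneConverges_iterate hP he hk0 hk1 hu
  refine ⟨u, hu, fun v hv => ?_, hconv⟩
  refine (coneConverges_const hp v).unique hP hp ?_
  simpa only [Function.iterate_fixed hv] using hconv v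

/-- a nonlinear contraction (with `ξ_e (φ e) < 1`) on a cone-complete
TVS-cone metric space has a unique fixed point, and all Picard iterates cone-converge to it. -/
theorem stmt_17 {E X : Type*} [AddCommGroup E] [Module ℝ E] [TopologicalSpace E]
    [IsTopologicalAddGroup E] [ContinuousSMul ℝ E] [T2Space E] [Nonempty X]
    (P : Set E) (hP : IsTVSCone P) (p : X → X → E) (hp : IsConeMetric P p)
    (hcomplete : ConeComplete P p)
    (e : E) (he : e ∈ interior P) (T : X → X) (φ : E → E)
    (hφP : ∀ a ∈ P, φ a ∈ P)
    (hφmono : ∀ a ∈ P, ∀ b ∈ P, ConeLe P a b → ConeLe P (φ a) (φ b))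
    (hφhom : ∀ r : ℝ, 0 ≤ r → ConeLe P (φ (r • e)) (r • φ e))
    (hφlt : xiScal P e (φ e) < 1)
    (hT : ∀ x y : X, ConeLe P (p (T x) (T y)) (φ (p x y))) :
    ∃ u : X, T u = u ∧ (∀ v : X, T v = v → v = u) ∧
      ∀ x : X, ConeConverges P p (fun n => T^[n] x) u :=
  stmt_17_general P hP p hp hcomplete e he T φ hφmono hφhom hφlt hT
end
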